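/- arXiv:1912.09070 — 7 statements merged into one kernel-verified Lean document; each statement's English description precedes it below -/
import Mathlib

section
/- Let A be a C*-algebra and let a, b be self-adjoint elements of A. The following are equivalent: (1) |a| * |b| = 0; (2) the four positive elements a⁺, a⁻, b⁺, b⁻ are mutually algebraically orthogonal, i.e., the product of any two distinct elements among them is 0; (3) |a + b| = |a| + |b| and |a − b| = |a| + |b|. -/
section helpers

variable {A : Type*} [NonUnitalCStarAlgebra A] [PartialOrder A] [StarOrderedRing A]

open ContinuousMapZero in
lemma commute_cfcn_aux {a b : A} (hab : Commute a b) (f : ℝ → ℝ) :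
    Commute (cfcₙ f a) b := by
  refine cfcₙ_cases (fun x ↦ Commute x b) a f (Commute.zero_left b) fun hf hf0 ha' ↦ ?_
  suffices H : ∀ g : C(quasispectrum ℝ a, ℝ)₀, Commute (cfcₙHom ha' g) b from H _
  intro g
  induction g using ContinuousMapZero.induction_on_of_compact with
  | zero => simp
  | id =>
    show Commute (cfcₙHom ha' (ContinuousMapZero.id (quasispectrum ℝ a))) b
    rw [cfcₙHom_id ha']; exact hab
  | star_id =>
    rw [star_trivial]
    show Commute (cfcₙHom ha' (ContinuousMapZero.id (quasispectrum ℝ a))) b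
    rw [cfcₙHom_id ha']; exact hab
  | add f g hf hg => rw [map_add]; exact hf.add_left hg
  | mul f g hf hg => rw [map_mul]; exact hf.mul_left hg
  | smul r f hf => rw [map_smul]; exact hf.smul_left r
  | frequently f hf =>
    have hcl : IsClosed {x : A | Commute x b} :=
      isClosed_eq (continuous_id.mul continuous_const) (continuous_const.mul continuous_id)
    have : IsClosed {g : C(quasispectrum ℝ a, ℝ)₀ | Commute (cfcₙHom ha' g) b} :=
      hcl.preimage (cfcₙHom_isClosedEmbedding ha').continuous
    exact this.closure_subset (mem_closure_iff_frequently.mpr hf)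

lemma commute_sqrt_aux {a b : A} (ha : 0 ≤ a) (hab : Commute a b) :
    Commute (CFC.sqrt a) b := by
  rw [show CFC.sqrt a = cfcₙ NNReal.sqrt a from rfl, cfcₙ_nnreal_eq_real _ _ ha]
  exact commute_cfcn_aux hab _

/-- `|a| = a⁺ + a⁻`. -/
lemma cstarAbs_eq_posPart_add_negPart (a : A) (ha : IsSelfAdjoint a) :
    CFC.sqrt (a * a) = a⁺ + a⁻ := by
  have key : a * a = (a⁺ + a⁻) * (a⁺ + a⁻) := by
    conv_lhs => rw [← CFC.posPart_sub_negPart a ha]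
    rw [sub_mul, mul_sub, mul_sub, add_mul, mul_add, mul_add,
      CFC.posPart_mul_negPart, CFC.negPart_mul_posPart]
    abel
  rw [key, CFC.sqrt_mul_self _ (add_nonneg (CFC.posPart_nonneg a) (CFC.negPart_nonneg a))]

/-- `|a| * |a| = a * a`. -/
lemma cstarAbs_mul_self_aux (a : A) (ha : IsSelfAdjoint a) :
    CFC.sqrt (a * a) * CFC.sqrt (a * a) = a * a :=
  CFC.sqrt_mul_sqrt_self _ (by simpa [ha.star_eq] using star_mul_self_nonneg a)

/-- Orthogonality passes to smaller positive elements. -/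
lemma mul_eq_zero_of_le_of_orth {x p q : A} (hx : 0 ≤ x) (hxp : x ≤ p) (hq : 0 ≤ q)
    (h : p * q = 0) : x * q = 0 := by
  have hq' : IsSelfAdjoint q := .of_nonneg hq
  have h1 : q * x * q = 0 := by
    refine le_antisymm ?_ ?_
    · calc q * x * q = star q * x * q := by rw [hq'.star_eq]
        _ ≤ star q * p * q := star_left_conjugate_le_conjugate hxp q
        _ = q * (p * q) := by rw [hq'.star_eq, mul_assoc]
        _ = 0 := by rw [h, mul_zero]
    · simpa [hq'.star_eq] using star_left_conjugate_nonneg hx q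
  have hs : CFC.sqrt x * CFC.sqrt x = x := CFC.sqrt_mul_sqrt_self x hx
  have hsq : CFC.sqrt x * q = 0 := by
    have hsa : IsSelfAdjoint (CFC.sqrt x) := .of_nonneg (CFC.sqrt_nonneg _)
    rw [← CStarRing.star_mul_self_eq_zero_iff (CFC.sqrt x * q)]
    rw [star_mul, hsa.star_eq, hq'.star_eq]
    calc q * CFC.sqrt x * (CFC.sqrt x * q) = q * (CFC.sqrt x * CFC.sqrt x) * q := by
          simp only [mul_assoc]
      _ = q * x * q := by rw [hs]
      _ = 0 := h1
  calc x * q = CFC.sqrt x * (CFC.sqrt x * q) := by rw [← mul_assoc, hs]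
    _ = 0 := by rw [hsq, mul_zero]

/-- Anticommuting positive elements are orthogonal. -/
lemma mul_eq_zero_of_nonneg_of_anticomm {p q : A} (hp : 0 ≤ p) (hq : 0 ≤ q)
    (h : p * q + q * p = 0) : p * q = 0 := by
  have hpq : p * q = -(q * p) := eq_neg_of_add_eq_zero_left h
  have hqp : q * p = -(p * q) := eq_neg_of_add_eq_zero_right h
  have hc : Commute (p * p) q := by
    show p * p * q = q * (p * p)
    calc p * p * q = p * (p * q) := mul_assoc _ _ _
      _ = p * -(q * p) := by rw [hpq]
      _ = -(p * q) * p := by rw [mul_neg, neg_mul, mul_assoc]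
      _ = q * p * p := by rw [← hqp]
      _ = q * (p * p) := mul_assoc _ _ _
  have hpp : (0 : A) ≤ p * p := by
    simpa [(IsSelfAdjoint.of_nonneg hp).star_eq] using star_mul_self_nonneg p
  have hcomm : Commute p q := by
    have := commute_sqrt_aux hpp hc
    rwa [CFC.sqrt_mul_self p hp] at this
  have h2 : p * q + p * q = 0 := by nth_rw 2 [hcomm.eq]; exact h
  have h3 : (2 : ℝ) • (p * q) = 0 := by rw [two_smul]; exact h2
  exact (smul_eq_zero.mp h3).resolve_left two_ne_zero

/-- upgrade: pass orthogonality both ways -/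
lemma orth_symm {x y : A} (hx : 0 ≤ x) (hy : 0 ≤ y) (h : x * y = 0) : y * x = 0 := by
  have := congrArg star h
  rwa [star_mul, (IsSelfAdjoint.of_nonneg hx).star_eq, (IsSelfAdjoint.of_nonneg hy).star_eq,
    star_zero] at this

end helpers


/-- The absolute value `|a| = (a²)^{1/2}` of a self-adjoint element of a C*-algebra,
via the continuous functional calculus. -/
noncomputable def cstarAbs {A : Type*} [NonUnitalCStarAlgebra A] [PartialOrder A]
    [StarOrderedRing A] (a : A) : A :=
  CFC.sqrt (a * a)

/-- **Proposition 2.** For self-adjoint elements `a, b` of a C*-algebra `A`, the following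
are equivalent: (1) `|a| * |b| = 0`; (2) `a⁺, a⁻, b⁺, b⁻` are mutually algebraically
orthogonal; (3) `|a + b| = |a| + |b|` and `|a - b| = |a| + |b|`. -/
theorem abs_orthogonal_tfae
    {A : Type*} [NonUnitalCStarAlgebra A] [PartialOrder A] [StarOrderedRing A]
    (a b : A) (ha : IsSelfAdjoint a) (hb : IsSelfAdjoint b) :
    List.TFAE
      [ cstarAbs a * cstarAbs b = 0,
        ([a⁺, a⁻, b⁺, b⁻] : List A).Pairwise (fun x y => x * y = 0 ∧ y * x = 0),
        cstarAbs (a + b) = cstarAbs a + cstarAbs b ∧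
          cstarAbs (a - b) = cstarAbs a + cstarAbs b ] := by
  have habsa : cstarAbs a = a⁺ + a⁻ := cstarAbs_eq_posPart_add_negPart a ha
  have habsb : cstarAbs b = b⁺ + b⁻ := cstarAbs_eq_posPart_add_negPart b hb
  have hap : (0 : A) ≤ a⁺ := CFC.posPart_nonneg a
  have han : (0 : A) ≤ a⁻ := CFC.negPart_nonneg a
  have hbp : (0 : A) ≤ b⁺ := CFC.posPart_nonneg b
  have hbn : (0 : A) ≤ b⁻ := CFC.negPart_nonneg b
  have hA : (0 : A) ≤ a⁺ + a⁻ := add_nonneg hap han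
  have hB : (0 : A) ≤ b⁺ + b⁻ := add_nonneg hbp hbn
  tfae_have 1 → 2
  | h => by
    rw [habsa, habsb] at h
    -- a⁺ * (b⁺ + b⁻) = 0 and a⁻ * (b⁺ + b⁻) = 0
    have h1 : a⁺ * (b⁺ + b⁻) = 0 :=
      mul_eq_zero_of_le_of_orth hap (le_add_of_nonneg_right han) hB h
    have h2 : a⁻ * (b⁺ + b⁻) = 0 :=
      mul_eq_zero_of_le_of_orth han (le_add_of_nonneg_left hap) hB h
    have h1' : (b⁺ + b⁻) * a⁺ = 0 := orth_symm hap hB h1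
    have h2' : (b⁺ + b⁻) * a⁻ = 0 := orth_symm han hB h2
    have hpp : b⁺ * a⁺ = 0 :=
      mul_eq_zero_of_le_of_orth hbp (le_add_of_nonneg_right hbn) hap h1'
    have hnp : b⁻ * a⁺ = 0 :=
      mul_eq_zero_of_le_of_orth hbn (le_add_of_nonneg_left hbp) hap h1'
    have hpn : b⁺ * a⁻ = 0 :=
      mul_eq_zero_of_le_of_orth hbp (le_add_of_nonneg_right hbn) han h2'
    have hnn : b⁻ * a⁻ = 0 :=
      mul_eq_zero_of_le_of_orth hbn (le_add_of_nonneg_left hbp) han h2'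
    refine List.Pairwise.cons ?_ (List.Pairwise.cons ?_ (List.Pairwise.cons ?_
      (List.Pairwise.cons ?_ .nil))) <;>
        intro x hx <;> simp only [List.mem_cons, List.not_mem_nil, or_false] at hx
    · rcases hx with rfl | rfl | rfl
      · exact ⟨CFC.posPart_mul_negPart a, CFC.negPart_mul_posPart a⟩
      · exact ⟨orth_symm hbp hap hpp, hpp⟩
      · exact ⟨orth_symm hbn hap hnp, hnp⟩
    · rcases hx with rfl | rfl
      · exact ⟨orth_symm hbp han hpn, hpn⟩
      · exact ⟨orth_symm hbn han hnn, hnn⟩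
    · rcases hx with rfl
      exact ⟨CFC.posPart_mul_negPart b, CFC.negPart_mul_posPart b⟩
  tfae_have 2 → 3
  | h => by
    simp only [List.pairwise_cons, List.mem_cons, List.mem_singleton, List.not_mem_nil,
      forall_eq_or_imp, forall_eq, or_false, false_or] at h
    obtain ⟨⟨-, ⟨hpp, hpp'⟩, ⟨hpn, hpn'⟩⟩, ⟨⟨hnp, hnp'⟩, ⟨hnn, hnn'⟩⟩, -⟩ := h
    have hab0 : a * b = 0 := by
      conv_lhs => rw [← CFC.posPart_sub_negPart a ha, ← CFC.posPart_sub_negPart b hb]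
      rw [sub_mul, mul_sub, mul_sub, hpp, hpn, hnp, hnn]
      abel
    have hba0 : b * a = 0 := by
      conv_lhs => rw [← CFC.posPart_sub_negPart a ha, ← CFC.posPart_sub_negPart b hb]
      rw [mul_sub, sub_mul, sub_mul, hpp', hpn', hnp', hnn']
      abel
    have hAB : (a⁺ + a⁻) * (b⁺ + b⁻) = 0 := by
      rw [add_mul, mul_add, mul_add, hpp, hpn, hnp, hnn]
      abel
    have hBA : (b⁺ + b⁻) * (a⁺ + a⁻) = 0 := orth_symm hA hB hAB
    have hPP : (a⁺ + a⁻) * (a⁺ + a⁻) = a * a := by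
      rw [← habsa]; exact cstarAbs_mul_self_aux a ha
    have hQQ : (b⁺ + b⁻) * (b⁺ + b⁻) = b * b := by
      rw [← habsb]; exact cstarAbs_mul_self_aux b hb
    have hS : (0 : A) ≤ (a⁺ + a⁻) + (b⁺ + b⁻) := add_nonneg hA hB
    constructor
    · show CFC.sqrt ((a + b) * (a + b)) = cstarAbs a + cstarAbs b
      rw [habsa, habsb]
      have k1 : (a + b) * (a + b) = a * a + b * b := by
        rw [mul_add, add_mul, add_mul, hab0, hba0]; abel
      have k2' : ∀ P Q : A, P * Q = 0 → Q * P = 0 →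
          (P + Q) * (P + Q) = P * P + Q * Q := by
        intro P Q h1' h2'; rw [mul_add, add_mul, add_mul, h1', h2']; abel
      have k2 : ((a⁺ + a⁻) + (b⁺ + b⁻)) * ((a⁺ + a⁻) + (b⁺ + b⁻)) = a * a + b * b := by
        rw [k2' _ _ hAB hBA, hPP, hQQ]
      have key : (a + b) * (a + b) = ((a⁺ + a⁻) + (b⁺ + b⁻)) * ((a⁺ + a⁻) + (b⁺ + b⁻)) :=
        k1.trans k2.symm
      rw [key, CFC.sqrt_mul_self _ hS]
    · show CFC.sqrt ((a - b) * (a - b)) = cstarAbs a + cstarAbs b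
      rw [habsa, habsb]
      have k1 : (a - b) * (a - b) = a * a + b * b := by
        rw [mul_sub, sub_mul, sub_mul, hab0, hba0]; abel
      have k2' : ∀ P Q : A, P * Q = 0 → Q * P = 0 →
          (P + Q) * (P + Q) = P * P + Q * Q := by
        intro P Q h1' h2'; rw [mul_add, add_mul, add_mul, h1', h2']; abel
      have k2 : ((a⁺ + a⁻) + (b⁺ + b⁻)) * ((a⁺ + a⁻) + (b⁺ + b⁻)) = a * a + b * b := by
        rw [k2' _ _ hAB hBA, hPP, hQQ]
      have key : (a - b) * (a - b) = ((a⁺ + a⁻) + (b⁺ + b⁻)) * ((a⁺ + a⁻) + (b⁺ + b⁻)) :=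
        k1.trans k2.symm
      rw [key, CFC.sqrt_mul_self _ hS]
  tfae_have 3 → 1
  | ⟨h1, h2⟩ => by
    set P := cstarAbs a with hP
    set Q := cstarAbs b with hQ
    have hPnn : (0 : A) ≤ P := CFC.sqrt_nonneg _
    have hQnn : (0 : A) ≤ Q := CFC.sqrt_nonneg _
    have hPP : P * P = a * a := cstarAbs_mul_self_aux a ha
    have hQQ : Q * Q = b * b := cstarAbs_mul_self_aux b hb
    have e1 : (P + Q) * (P + Q) = (a + b) * (a + b) := by
      rw [← h1]; exact cstarAbs_mul_self_aux (a + b) (ha.add hb)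
    have e2 : (P + Q) * (P + Q) = (a - b) * (a - b) := by
      rw [← h2]; exact cstarAbs_mul_self_aux (a - b) (ha.sub hb)
    have c1 : P * Q + Q * P = a * b + b * a := by
      have h' : a * a + (P * Q + Q * P) + b * b = a * a + (a * b + b * a) + b * b := by
        calc a * a + (P * Q + Q * P) + b * b
            = P * P + (P * Q + Q * P) + Q * Q := by rw [hPP, hQQ]
          _ = (P + Q) * (P + Q) := by noncomm_ring
          _ = (a + b) * (a + b) := e1
          _ = a * a + (a * b + b * a) + b * b := by noncomm_ring
      exact add_left_cancel (add_right_cancel h')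
    have c2 : P * Q + Q * P = -(a * b + b * a) := by
      have h' : a * a + (P * Q + Q * P) + b * b = a * a + -(a * b + b * a) + b * b := by
        calc a * a + (P * Q + Q * P) + b * b
            = P * P + (P * Q + Q * P) + Q * Q := by rw [hPP, hQQ]
          _ = (P + Q) * (P + Q) := by noncomm_ring
          _ = (a - b) * (a - b) := e2
          _ = a * a + -(a * b + b * a) + b * b := by noncomm_ring
      exact add_left_cancel (add_right_cancel h')
    have hs : a * b + b * a = -(a * b + b * a) := c1.symm.trans c2
    have hss : (a * b + b * a) + (a * b + b * a) = 0 := by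
      nth_rw 2 [hs]; exact add_neg_cancel _
    have hsmul : (2 : ℝ) • (a * b + b * a) = 0 := by rw [two_smul]; exact hss
    have hzero : a * b + b * a = 0 := (smul_eq_zero.mp hsmul).resolve_left two_ne_zero
    have : P * Q + Q * P = 0 := by rw [c1, hzero]
    exact mul_eq_zero_of_nonneg_of_anticomm hPnn hQnn this
  tfae_finish
end

section
/- Let A be a C*-algebra and let x ∈ A. In the C*-algebra M₂(A) of 2×2 matrices over A, the absolute value of the self-adjoint matrix [[0, x], [x*, 0]] equals the diagonal matrix [[|x*|, 0], [0, |x|]], where |x| = (x* x)^{1/2} and |x*| = (x x*)^{1/2}. -/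
/-- In a non-unital C⋆-algebra, the product of two commuting nonnegative elements is
nonnegative. -/
private lemma aux_mul_nonneg {A : Type*} [NonUnitalCStarAlgebra A] [PartialOrder A]
    [StarOrderedRing A] {c d : A} (hc : 0 ≤ c) (hd : 0 ≤ d) (hcomm : c * d = d * c) :
    0 ≤ c * d := by
  rw [← Unitization.inr_nonneg_iff]
  set c' : Unitization ℂ A := (c : Unitization ℂ A) with hc'def
  set d' : Unitization ℂ A := (d : Unitization ℂ A) with hd'def
  have hc' : 0 ≤ c' := Unitization.inr_nonneg_iff.mpr hc
  have hd' : 0 ≤ d' := Unitization.inr_nonneg_iff.mpr hd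
  have hmul : ((c * d : A) : Unitization ℂ A) = c' * d' := by
    simp [hc'def, hd'def]
  have hsa₀ : IsSelfAdjoint (c * d) := by
    rw [IsSelfAdjoint, star_mul, (IsSelfAdjoint.of_nonneg hd).star_eq,
      (IsSelfAdjoint.of_nonneg hc).star_eq, hcomm]
  have hsa : IsSelfAdjoint ((c * d : A) : Unitization ℂ A) :=
    (Unitization.isSelfAdjoint_inr (R := ℂ)).mpr hsa₀
  rw [StarOrderedRing.nonneg_iff_spectrum_nonneg (R := ℝ) _ hsa]
  intro z hz
  rcases eq_or_ne z 0 with rfl | hz0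
  · exact le_refl 0
  · have hsqrt_sa : star (CFC.sqrt c') = CFC.sqrt c' :=
      IsSelfAdjoint.of_nonneg (CFC.sqrt_nonneg _)
    have hfact : c' * d' = CFC.sqrt c' * (CFC.sqrt c' * d') := by
      rw [← mul_assoc, CFC.sqrt_mul_sqrt_self c' hc']
    have hz' : z ∈ spectrum ℝ (CFC.sqrt c' * d' * CFC.sqrt c') \ {0} := by
      have h1 : z ∈ spectrum ℝ (CFC.sqrt c' * (CFC.sqrt c' * d')) \ {0} := by
        refine ⟨?_, hz0⟩
        rw [← hfact, ← hmul]
        exact hz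
      rw [spectrum.nonzero_mul_comm] at h1
      simpa [mul_assoc] using h1
    have hpos : 0 ≤ CFC.sqrt c' * d' * CFC.sqrt c' := by
      have := star_right_conjugate_nonneg hd' (CFC.sqrt c')
      rwa [hsqrt_sa] at this
    exact spectrum_nonneg_of_nonneg hpos hz'.1

/-- Quadratic-form positivity of `star y * y` over a 2×2 matrix. -/
private lemma aux_form_nonneg {A : Type*} [NonUnitalCStarAlgebra A] [PartialOrder A]
    [StarOrderedRing A] (y : Matrix (Fin 2) (Fin 2) A) (u w : A) :
    0 ≤ star u * ((star y * y) 0 0) * u + star u * ((star y * y) 0 1) * w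
      + star w * ((star y * y) 1 0) * u + star w * ((star y * y) 1 1) * w := by
  have key : ∀ i j, (star y * y) i j = star (y 0 i) * y 0 j + star (y 1 i) * y 1 j := by
    intro i j
    simp [Matrix.mul_apply, Fin.sum_univ_two, Matrix.star_apply]
  calc (0:A) ≤ star (y 0 0 * u + y 0 1 * w) * (y 0 0 * u + y 0 1 * w)
        + star (y 1 0 * u + y 1 1 * w) * (y 1 0 * u + y 1 1 * w) :=
      add_nonneg (star_mul_self_nonneg _) (star_mul_self_nonneg _)
    _ = _ := by simp only [key, star_add, star_mul]; noncomm_ring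

/-- **Absolute value of an off-diagonal self-adjoint 2×2 matrix.**
Let `A` be a C*-algebra and `x ∈ A`.  In `M₂(A)`, the absolute value of the self-adjoint
matrix `M = [[0, x], [x*, 0]]` is the diagonal matrix `D = [[|x*|, 0], [0, |x|]]`, where
`|x| = (x* x)^{1/2}` and `|x*| = (x x*)^{1/2}`.  Since the absolute value `|M|` is the
unique positive square root of `star M * M` (positivity in a C*-algebra meaning being of
the form `star y * y`), this is expressed as: `M` is self-adjoint, `D` is positive,
`D * D = star M * M`, and `D` is the unique such element. -/
theorem abs_offDiag_matrix
    {A : Type*} [NonUnitalCStarAlgebra A] [PartialOrder A] [StarOrderedRing A] (x : A) :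
    IsSelfAdjoint (!![0, x; star x, 0] : Matrix (Fin 2) (Fin 2) A) ∧
    (∃ y : Matrix (Fin 2) (Fin 2) A,
        (!![CFC.sqrt (x * star x), 0; 0, CFC.sqrt (star x * x)] : Matrix (Fin 2) (Fin 2) A)
          = star y * y) ∧
    (!![CFC.sqrt (x * star x), 0; 0, CFC.sqrt (star x * x)] : Matrix (Fin 2) (Fin 2) A) *
        !![CFC.sqrt (x * star x), 0; 0, CFC.sqrt (star x * x)]
      = star (!![0, x; star x, 0] : Matrix (Fin 2) (Fin 2) A) * !![0, x; star x, 0] ∧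
    ∀ E : Matrix (Fin 2) (Fin 2) A, (∃ y, E = star y * y) →
      E * E = star (!![0, x; star x, 0] : Matrix (Fin 2) (Fin 2) A) * !![0, x; star x, 0] →
      E = !![CFC.sqrt (x * star x), 0; 0, CFC.sqrt (star x * x)] := by
  have hxx : (0:A) ≤ x * star x := mul_star_self_nonneg x
  have hxx' : (0:A) ≤ star x * x := star_mul_self_nonneg x
  have hMsa : IsSelfAdjoint (!![0, x; star x, 0] : Matrix (Fin 2) (Fin 2) A) := by
    ext i j
    fin_cases i <;> fin_cases j <;> simp [Matrix.star_apply]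
  have hMM : star (!![0, x; star x, 0] : Matrix (Fin 2) (Fin 2) A) * !![0, x; star x, 0]
      = !![x * star x, 0; 0, star x * x] := by
    rw [hMsa.star_eq]
    ext i j
    fin_cases i <;> fin_cases j <;> simp [Matrix.mul_apply, Fin.sum_univ_two]
  refine ⟨hMsa, ?_, ?_, ?_⟩
  · refine ⟨!![CFC.sqrt (CFC.sqrt (x * star x)), 0; 0, CFC.sqrt (CFC.sqrt (star x * x))], ?_⟩
    ext i j
    fin_cases i <;> fin_cases j <;>
      simp [Matrix.mul_apply, Fin.sum_univ_two, Matrix.star_apply,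
        (IsSelfAdjoint.of_nonneg (CFC.sqrt_nonneg (A := A) _)).star_eq,
        CFC.sqrt_mul_sqrt_self _ (CFC.sqrt_nonneg (A := A) _)]
  · rw [hMM]
    ext i j
    fin_cases i <;> fin_cases j <;>
      simp [Matrix.mul_apply, Fin.sum_univ_two,
        CFC.sqrt_mul_sqrt_self _ hxx, CFC.sqrt_mul_sqrt_self _ hxx']
  · rintro E ⟨y, hy⟩ hsq
    rw [hMM] at hsq
    set a := E 0 0 with ha_def
    set b := E 0 1 with hb_def
    set d := E 1 1 with hd_def
    have hEsa : star E = E := by rw [hy, star_mul, star_star]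
    have hE10 : E 1 0 = star b := by
      conv_lhs => rw [← hEsa]
      simp [Matrix.star_apply, hb_def]
    have hentry : ∀ i j, E i j = star (y 0 i) * y 0 j + star (y 1 i) * y 1 j := by
      intro i j
      rw [hy]
      simp [Matrix.mul_apply, Fin.sum_univ_two, Matrix.star_apply]
    have ha : 0 ≤ a := by
      rw [ha_def, hentry]
      exact add_nonneg (star_mul_self_nonneg _) (star_mul_self_nonneg _)
    have hd : 0 ≤ d := by
      rw [hd_def, hentry]
      exact add_nonneg (star_mul_self_nonneg _) (star_mul_self_nonneg _)
    set c := star b * b with hc_def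
    have hc : 0 ≤ c := star_mul_self_nonneg b
    have hcsa : star c = c := IsSelfAdjoint.of_nonneg hc
    -- entry equations from `E * E = diag (x x*, x* x)`
    have h00 : a * a + b * star b = x * star x := by
      have := Matrix.ext_iff.mpr hsq 0 0
      simpa [Matrix.mul_apply, Fin.sum_univ_two, hE10] using this
    have h01 : a * b + b * d = 0 := by
      have := Matrix.ext_iff.mpr hsq 0 1
      simpa [Matrix.mul_apply, Fin.sum_univ_two, hE10] using this
    have h11 : c + d * d = star x * x := by
      have := Matrix.ext_iff.mpr hsq 1 1
      simpa [Matrix.mul_apply, Fin.sum_univ_two, hE10, hc_def] using this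
    -- step 1 : `c * d = 0`
    have hab : a * b = -(b * d) := eq_neg_of_add_eq_zero_left h01
    have hbab : star b * a * b = -(c * d) := by
      rw [mul_assoc, hab, hc_def]
      noncomm_ring
    have hcd_le : 0 ≤ -(c * d) := hbab ▸ star_left_conjugate_nonneg ha b
    have hcdsa : star (c * d) = c * d := by
      have h1 := IsSelfAdjoint.of_nonneg hcd_le
      rw [IsSelfAdjoint, star_neg] at h1
      exact neg_injective h1
    have hcomm : c * d = d * c := by
      conv_lhs => rw [← hcdsa]
      rw [star_mul, hcsa, (IsSelfAdjoint.of_nonneg hd).star_eq]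
    have hcd0 : c * d = 0 :=
      le_antisymm (neg_nonneg.mp hcd_le) (aux_mul_nonneg hc hd hcomm)
    -- step 2 : `b * d = 0` and `a * b = 0`
    have hdc0 : d * c = 0 := hcomm ▸ hcd0
    have hbd0 : b * d = 0 := by
      rw [← CStarRing.star_mul_self_eq_zero_iff (b * d)]
      calc star (b * d) * (b * d) = d * c * d := by
            rw [star_mul, (IsSelfAdjoint.of_nonneg hd).star_eq, hc_def]; noncomm_ring
        _ = 0 := by rw [hdc0, zero_mul]
    have hab0 : a * b = 0 := by rw [hab, hbd0, neg_zero]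
    have hba0 : star b * a = 0 := by
      have := congrArg star hab0
      rwa [star_mul, (IsSelfAdjoint.of_nonneg ha).star_eq, star_zero] at this
    -- step 3 : quadratic form with vector `(-(b*c), c)` forces `c = 0`, hence `b = 0`
    have hform : 0 ≤ star (-(b * c)) * a * -(b * c) + star (-(b * c)) * b * c
        + star c * star b * -(b * c) + star c * d * c := by
      have h1 := aux_form_nonneg y (-(b * c)) c
      rw [← hy, hE10] at h1
      exact h1
    have hform' : 0 ≤ -(c * c * c) + -(c * c * c) := by
      have t1 : star (-(b * c)) * a * -(b * c) = c * (star b * a) * (b * c) := by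
        rw [star_neg, star_mul, hcsa]
        noncomm_ring
      have t2 : star (-(b * c)) * b * c = -(c * (star b * b) * c) := by
        rw [star_neg, star_mul, hcsa]
        noncomm_ring
      have t3 : star c * star b * -(b * c) = -(c * (star b * b) * c) := by
        rw [hcsa]
        noncomm_ring
      have t4 : star c * d * c = c * d * c := by rw [hcsa]
      rw [t1, t2, t3, t4, hba0, hcd0, ← hc_def] at hform
      simpa [mul_assoc] using hform
    have hccc : 0 ≤ c * c * c := by
      have := star_left_conjugate_nonneg hc c
      rwa [hcsa] at this
    have hccc0 : c * c * c = 0 := by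
      refine le_antisymm ?_ hccc
      have h2 : c * c * c + c * c * c ≤ 0 := by
        rwa [← neg_nonneg, neg_add]
      calc c * c * c ≤ c * c * c + (c * c * c) := le_add_of_nonneg_right hccc
        _ ≤ 0 := h2
    have hc0 : c = 0 := by
      have h4 : (c * c) * (c * c) = 0 := by
        calc (c * c) * (c * c) = (c * c * c) * c := by noncomm_ring
          _ = 0 := by rw [hccc0, zero_mul]
      have h5 : c * c = 0 := by
        rw [← CStarRing.star_mul_self_eq_zero_iff (c * c)]
        rwa [star_mul, hcsa]
      rw [← CStarRing.star_mul_self_eq_zero_iff c]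
      rwa [hcsa]
    have hb0 : b = 0 := by
      rw [← CStarRing.star_mul_self_eq_zero_iff b, ← hc_def]
      exact hc0
    -- step 4 : identify the diagonal entries
    have haa : a * a = x * star x := by
      rw [hb0] at h00
      simpa using h00
    have hdd : d * d = star x * x := by
      rw [hc0] at h11
      simpa using h11
    have hsa' : CFC.sqrt (x * star x) = a := CFC.sqrt_unique haa ha
    have hsd' : CFC.sqrt (star x * x) = d := CFC.sqrt_unique hdd hd
    ext i j
    fin_cases i <;> fin_cases j
    · simpa using hsa'.symm
    · simpa using hb0
    · simpa [hE10] using (by rw [hb0, star_zero] : star b = 0)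
    · simpa using hsd'.symm
end

section
/- Let A be a C*-algebra and let a, b ∈ A. Then (a b* = 0 and a* b = 0) if and only if (|a| * |b| = 0 and |a*| * |b*| = 0), where |y| = (y* y)^{1/2} for y ∈ A. -/
private lemma sqrt_mul_eq_zero {A : Type*} [NonUnitalCStarAlgebra A] [PartialOrder A]
    [StarOrderedRing A] {x y : A} (hx : 0 ≤ x) (hy : 0 ≤ y) (h : x * y = 0) :
    CFC.sqrt x * y = 0 := by
  have h1 : star (CFC.sqrt x * y) * (CFC.sqrt x * y) = 0 := by
    rw [star_mul, (IsSelfAdjoint.of_nonneg hy).star_eq,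
      (IsSelfAdjoint.of_nonneg (CFC.sqrt_nonneg x)).star_eq]
    calc y * CFC.sqrt x * (CFC.sqrt x * y)
        = y * (CFC.sqrt x * CFC.sqrt x) * y := by noncomm_ring
      _ = y * (x * y) := by rw [CFC.sqrt_mul_sqrt_self x hx]; noncomm_ring
      _ = 0 := by rw [h, mul_zero]
  exact (CStarRing.star_mul_self_eq_zero_iff _).mp h1

private lemma sqrt_mul_sqrt_eq_zero {A : Type*} [NonUnitalCStarAlgebra A] [PartialOrder A]
    [StarOrderedRing A] {x y : A} (hx : 0 ≤ x) (hy : 0 ≤ y) (h : x * y = 0) :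
    CFC.sqrt x * CFC.sqrt y = 0 := by
  have h1 : CFC.sqrt x * y = 0 := sqrt_mul_eq_zero hx hy h
  have h2 : y * CFC.sqrt x = 0 := by
    have := congrArg star h1
    rwa [star_mul, (IsSelfAdjoint.of_nonneg hy).star_eq,
      (IsSelfAdjoint.of_nonneg (CFC.sqrt_nonneg x)).star_eq, star_zero] at this
  have h3 : CFC.sqrt y * CFC.sqrt x = 0 := sqrt_mul_eq_zero hy (CFC.sqrt_nonneg x) h2
  have := congrArg star h3
  rwa [star_mul, (IsSelfAdjoint.of_nonneg (CFC.sqrt_nonneg x)).star_eq,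
    (IsSelfAdjoint.of_nonneg (CFC.sqrt_nonneg y)).star_eq, star_zero] at this

/-- **Proposition 3 (second part).** Let `A` be a C*-algebra and `a, b ∈ A`.  Then `a` is
algebraically orthogonal to `b` (i.e. `a b* = 0` and `a* b = 0`) if and only if
`|a| * |b| = 0` and `|a*| * |b*| = 0`, where `|y| = (y* y)^{1/2}`. -/
theorem algebraically_orthogonal_iff_abs_orthogonal
    {A : Type*} [NonUnitalCStarAlgebra A] [PartialOrder A] [StarOrderedRing A] (a b : A) :
    (a * star b = 0 ∧ star a * b = 0) ↔
      (CFC.sqrt (star a * a) * CFC.sqrt (star b * b) = 0 ∧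
        CFC.sqrt (a * star a) * CFC.sqrt (b * star b) = 0) := by
  constructor
  · rintro ⟨h1, h2⟩
    constructor
    · refine sqrt_mul_sqrt_eq_zero (star_mul_self_nonneg a) (star_mul_self_nonneg b) ?_
      calc star a * a * (star b * b) = star a * (a * star b) * b := by noncomm_ring
        _ = 0 := by rw [h1]; noncomm_ring
    · refine sqrt_mul_sqrt_eq_zero (mul_star_self_nonneg a) (mul_star_self_nonneg b) ?_
      calc a * star a * (b * star b) = a * (star a * b) * star b := by noncomm_ring
        _ = 0 := by rw [h2]; noncomm_ring
  · rintro ⟨h1, h2⟩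
    have key : ∀ x y : A, CFC.sqrt (star x * x) * CFC.sqrt (star y * y) = 0 →
        x * star y = 0 := by
      intro x y h
      -- z = sqrt (star x * x) * star y, show z = 0 via z * star z
      have hz : CFC.sqrt (star x * x) * star y = 0 := by
        have : (CFC.sqrt (star x * x) * star y) * star (CFC.sqrt (star x * x) * star y) = 0 := by
          rw [star_mul, star_star, (IsSelfAdjoint.of_nonneg (CFC.sqrt_nonneg (star x * x))).star_eq]
          calc CFC.sqrt (star x * x) * star y * (y * CFC.sqrt (star x * x))
              = CFC.sqrt (star x * x) * ((CFC.sqrt (star y * y) * CFC.sqrt (star y * y)) *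
                CFC.sqrt (star x * x)) := by
                  rw [CFC.sqrt_mul_sqrt_self (star y * y) (star_mul_self_nonneg y)]; noncomm_ring
            _ = (CFC.sqrt (star x * x) * CFC.sqrt (star y * y)) *
                (CFC.sqrt (star y * y) * CFC.sqrt (star x * x)) := by noncomm_ring
            _ = 0 := by rw [h, zero_mul]
        exact (CStarRing.mul_star_self_eq_zero_iff _).mp this
      -- then (star x * x) * star y = 0
      have hz2 : star x * x * star y = 0 := by
        calc star x * x * star y
            = CFC.sqrt (star x * x) * (CFC.sqrt (star x * x) * star y) := by
              rw [← mul_assoc, CFC.sqrt_mul_sqrt_self (star x * x) (star_mul_self_nonneg x)]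
          _ = 0 := by rw [hz, mul_zero]
      -- now v = x * star y, star v * v = 0
      have hv : star (x * star y) * (x * star y) = 0 := by
        rw [star_mul, star_star]
        calc y * star x * (x * star y) = y * (star x * x * star y) := by noncomm_ring
          _ = 0 := by rw [hz2, mul_zero]
      exact (CStarRing.star_mul_self_eq_zero_iff _).mp hv
    refine ⟨key a b h1, ?_⟩
    have := key (star a) (star b) (by simpa [star_star] using h2)
    simpa [star_star] using this
end

section
/- Let A be a C*-algebra and let a, b be self-adjoint elements of A. Then there exists a unique self-adjoint element d of A such that (i) a ≤ d and b ≤ d, and (ii) (d − a) * (d − b) = 0 with d − a ≥ 0 and d − b ≥ 0. Moreover, this unique element is d = (1/2)(a + b + |a − b|). -/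
/-- **Theorem 4(2) (ortho-supremum).** Let `A` be a C*-algebra and let `a, b` be
self-adjoint elements of `A`.  There exists a unique self-adjoint `d ∈ A` such that
(a) `a ≤ d` and `b ≤ d`, and (b) `d - a ≥ 0`, `d - b ≥ 0` and `(d - a)(d - b) = 0`.
Moreover this unique element is `d = (1/2)(a + b + |a - b|)`, where
`|y| = (y²)^{1/2}`. -/
theorem ortho_supremum_exists_unique
    {A : Type*} [NonUnitalCStarAlgebra A] [PartialOrder A] [StarOrderedRing A]
    (a b : A) (ha : IsSelfAdjoint a) (hb : IsSelfAdjoint b) :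
    (∃! d : A, IsSelfAdjoint d ∧ a ≤ d ∧ b ≤ d ∧
        0 ≤ d - a ∧ 0 ≤ d - b ∧ (d - a) * (d - b) = 0) ∧
    ∀ d : A, (IsSelfAdjoint d ∧ a ≤ d ∧ b ≤ d ∧
        0 ≤ d - a ∧ 0 ≤ d - b ∧ (d - a) * (d - b) = 0) →
      d = (2 : ℝ)⁻¹ • (a + b + CFC.sqrt ((a - b) * (a - b))) := by
  have hc : IsSelfAdjoint (a - b) := ha.sub hb
  have hp : 0 ≤ (a - b)⁺ := CFC.posPart_nonneg (a - b)
  have hn : 0 ≤ (a - b)⁻ := CFC.negPart_nonneg (a - b)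
  have hpn : (a - b)⁺ * (a - b)⁻ = 0 := CFC.posPart_mul_negPart (a - b)
  have hnp : (a - b)⁻ * (a - b)⁺ = 0 := CFC.negPart_mul_posPart (a - b)
  have hsub : (a - b)⁺ - (a - b)⁻ = a - b := CFC.posPart_sub_negPart (a - b) hc
  have hsq : ((a - b)⁺ + (a - b)⁻) * ((a - b)⁺ + (a - b)⁻) = (a - b) * (a - b) := by
    have e : ((a - b)⁺ + (a - b)⁻) * ((a - b)⁺ + (a - b)⁻)
        = ((a - b)⁺ - (a - b)⁻) * ((a - b)⁺ - (a - b)⁻) := by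
      have expand1 : ((a - b)⁺ + (a - b)⁻) * ((a - b)⁺ + (a - b)⁻)
          = (a - b)⁺ * (a - b)⁺ + (a - b)⁺ * (a - b)⁻ + (a - b)⁻ * (a - b)⁺
            + (a - b)⁻ * (a - b)⁻ := by noncomm_ring
      have expand2 : ((a - b)⁺ - (a - b)⁻) * ((a - b)⁺ - (a - b)⁻)
          = (a - b)⁺ * (a - b)⁺ - (a - b)⁺ * (a - b)⁻ - (a - b)⁻ * (a - b)⁺
            + (a - b)⁻ * (a - b)⁻ := by noncomm_ring
      rw [expand1, expand2, hpn, hnp]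
      abel
    rw [e, hsub]
  have hsqrt : CFC.sqrt ((a - b) * (a - b)) = (a - b)⁺ + (a - b)⁻ :=
    CFC.sqrt_unique hsq (add_nonneg hp hn)
  have h1 : (a - b)⁺ = a - b + (a - b)⁻ := sub_eq_iff_eq_add.mp hsub
  have key : a + b + CFC.sqrt ((a - b) * (a - b)) = (2 : ℝ) • (a + (a - b)⁻) := by
    rw [hsqrt, h1]
    module
  have hd0 : (2 : ℝ)⁻¹ • (a + b + CFC.sqrt ((a - b) * (a - b))) = a + (a - b)⁻ := by
    rw [key, smul_smul]
    norm_num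
  have hd0' : a + (a - b)⁻ = b + (a - b)⁺ := by rw [h1]; abel
  have hprop : IsSelfAdjoint (a + (a - b)⁻) ∧ a ≤ a + (a - b)⁻ ∧ b ≤ a + (a - b)⁻ ∧
      0 ≤ a + (a - b)⁻ - a ∧ 0 ≤ a + (a - b)⁻ - b ∧
      (a + (a - b)⁻ - a) * (a + (a - b)⁻ - b) = 0 := by
    have e1 : a + (a - b)⁻ - a = (a - b)⁻ := by abel
    have e2 : a + (a - b)⁻ - b = (a - b)⁺ := by rw [h1]; abel
    refine ⟨ha.add (IsSelfAdjoint.of_nonneg hn), ?_, ?_, ?_, ?_, ?_⟩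
    · exact le_add_of_nonneg_right hn
    · calc b ≤ b + (a - b)⁺ := le_add_of_nonneg_right hp
        _ = a + (a - b)⁻ := hd0'.symm
    · rw [e1]; exact hn
    · rw [e2]; exact hp
    · rw [e1, e2]; exact hnp
  have huniq : ∀ d : A, (IsSelfAdjoint d ∧ a ≤ d ∧ b ≤ d ∧
      0 ≤ d - a ∧ 0 ≤ d - b ∧ (d - a) * (d - b) = 0) → d = a + (a - b)⁻ := by
    rintro d ⟨hd, -, -, hda, hdb, hmul⟩
    have hmul' : (d - b) * (d - a) = 0 := by
      have := congrArg star hmul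
      rwa [star_mul, star_zero, (IsSelfAdjoint.of_nonneg hda), (IsSelfAdjoint.of_nonneg hdb)]
        at this
    have habc : a - b = (d - b) - (d - a) := by abel
    obtain ⟨hcp, hcn⟩ := CFC.posPart_negPart_unique habc hmul' hdb hda
    rw [hcn]; abel
  constructor
  · exact ⟨a + (a - b)⁻, hprop, fun d hd => huniq d hd⟩
  · intro d hd
    rw [hd0]
    exact huniq d hd
end

section
/- Let V be an AM-space and let u, v ∈ V with u ≥ 0 and v ≥ 0. Then u ⊓ v = 0 if and only if u is absolutely ∞-orthogonal to v, i.e., for all c, d ∈ V with 0 ≤ c ≤ u and 0 ≤ d ≤ v and for every real number k, ‖c + k • d‖ = max(‖c‖, ‖k • d‖). -/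
private lemma smul_inf_aux {V : Type*} [Lattice V] [NormedAddCommGroup V] [NormedSpace ℝ V]
    [PosSMulMono ℝ V] {r : ℝ} (hr : 0 < r) (a b : V) :
    r • (a ⊓ b) = (r • a) ⊓ (r • b) := by
  refine le_antisymm (le_inf (smul_le_smul_of_nonneg_left inf_le_left hr.le)
    (smul_le_smul_of_nonneg_left inf_le_right hr.le)) ?_
  have h : r⁻¹ • ((r • a) ⊓ (r • b)) ≤ a ⊓ b := by
    refine le_inf ?_ ?_
    · have := smul_le_smul_of_nonneg_left (inf_le_left (a := r • a) (b := r • b))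
        (inv_nonneg.2 hr.le)
      rwa [smul_smul, inv_mul_cancel₀ hr.ne', one_smul] at this
    · have := smul_le_smul_of_nonneg_left (inf_le_right (a := r • a) (b := r • b))
        (inv_nonneg.2 hr.le)
      rwa [smul_smul, inv_mul_cancel₀ hr.ne', one_smul] at this
  have := smul_le_smul_of_nonneg_left h hr.le
  rwa [smul_smul, mul_inv_cancel₀ hr.ne', one_smul] at this

/-- **Proposition 6.** Let `V` be an AM-space (a lattice-ordered real vector space with a
norm such that `|u| ≤ |v|` implies `‖u‖ ≤ ‖v‖`, and `‖u ⊔ v‖ = max ‖u‖ ‖v‖` for positive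
`u, v`) and let `u, v ∈ V` with `u, v ≥ 0`.  Then `u ⊓ v = 0` if and only if `u` is
absolutely ∞-orthogonal to `v`, i.e. `‖c + k • d‖ = max ‖c‖ ‖k • d‖` whenever
`0 ≤ c ≤ u`, `0 ≤ d ≤ v` and `k ∈ ℝ`. -/
theorem AMspace_lattice_orthogonal_iff_abs_infty_orthogonal
    {V : Type*} [Lattice V] [NormedAddCommGroup V] [NormedSpace ℝ V]
    [CovariantClass V V (· + ·) (· ≤ ·)] [PosSMulMono ℝ V]
    (hmono : ∀ u v : V, |u| ≤ |v| → ‖u‖ ≤ ‖v‖)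
    (hsup : ∀ u v : V, 0 ≤ u → 0 ≤ v → ‖u ⊔ v‖ = max ‖u‖ ‖v‖)
    (u v : V) (hu : 0 ≤ u) (hv : 0 ≤ v) :
    u ⊓ v = 0 ↔
      ∀ c d : V, 0 ≤ c → c ≤ u → 0 ≤ d → d ≤ v →
        ∀ k : ℝ, ‖c + k • d‖ = max ‖c‖ ‖k • d‖ := by
  have norm_abs : ∀ x : V, ‖|x|‖ = ‖x‖ := fun x =>
    le_antisymm (hmono _ _ (by rw [abs_abs])) (hmono _ _ (by rw [abs_abs]))
  constructor
  · intro h c d hc hcu hd hdv k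
    -- c ⊓ d = 0
    have hcd : c ⊓ d = 0 :=
      le_antisymm (h ▸ inf_le_inf hcu hdv) (le_inf hc hd)
    -- key: for t ≥ 0, c ⊓ (t • d) = 0
    have key : ∀ t : ℝ, 0 ≤ t → c ⊓ (t • d) = 0 := by
      intro t ht
      set T : ℝ := max t 1 with hT
      have hT1 : (1:ℝ) ≤ T := le_max_right _ _
      have hTpos : (0:ℝ) < T := lt_of_lt_of_le one_pos hT1
      have h1 : c ≤ T • c := by
        have : 0 ≤ (T - 1) • c := smul_nonneg (by linarith) hc
        calc c = 1 • c := (one_smul ℝ c).symm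
          _ ≤ (T - 1) • c + 1 • c := le_add_of_nonneg_left this
          _ = T • c := by rw [← add_smul]; ring_nf
      have h2 : t • d ≤ T • d := by
        have : 0 ≤ (T - t) • d := smul_nonneg (by simp [hT]) hd
        calc t • d ≤ (T - t) • d + t • d := le_add_of_nonneg_left this
          _ = T • d := by rw [← add_smul]; ring_nf
      refine le_antisymm ?_ (le_inf hc (smul_nonneg ht hd))
      calc c ⊓ (t • d) ≤ (T • c) ⊓ (T • d) := inf_le_inf h1 h2
        _ = T • (c ⊓ d) := (smul_inf_aux hTpos c d).symm
        _ = 0 := by rw [hcd, smul_zero]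
    rcases le_or_gt 0 k with hk | hk
    · have hkd : c ⊓ (k • d) = 0 := key k hk
      have : c + k • d = c ⊔ (k • d) := by
        have := inf_add_sup c (k • d)
        rw [hkd, zero_add] at this
        exact this.symm
      rw [this, hsup c (k • d) hc (smul_nonneg hk hd)]
    · -- k < 0 : set e = (-k) • d
      set e : V := (-k) • d with he
      have he0 : 0 ≤ e := smul_nonneg (by linarith) hd
      have hce : c ⊓ e = 0 := key (-k) (by linarith)
      have hkd : k • d = -e := by rw [he, neg_smul, neg_neg]
      have habs : |c + k • d| = c ⊔ e := by
        rw [hkd, ← sub_eq_add_neg]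
        have := sup_sub_inf_eq_abs_sub e c
        rw [inf_comm, hce, sub_zero, sup_comm] at this
        exact this.symm
      calc ‖c + k • d‖ = ‖|c + k • d|‖ := (norm_abs _).symm
        _ = ‖c ⊔ e‖ := by rw [habs]
        _ = max ‖c‖ ‖e‖ := hsup c e hc he0
        _ = max ‖c‖ ‖k • d‖ := by rw [hkd, norm_neg]
  · intro h
    have := h (u ⊓ v) (u ⊓ v) (le_inf hu hv) inf_le_left (le_inf hu hv) inf_le_right (-1)
    rw [neg_one_smul, add_neg_cancel, norm_zero, norm_neg, max_self] at this
    exact norm_eq_zero.mp this.symm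
end

section
/- Let (V, e) be an order unit space satisfying: (1a) for each u ∈ V there exists a unique pair (u⁺, u⁻) of positive elements with u⁺ ⊥∞ᵃ u⁻ and u = u⁺ − u⁻ (set |u| := u⁺ + u⁻); and (1b) for all positive u, v, w ∈ V, if u ⊥∞ᵃ v and u ⊥∞ᵃ w then u ⊥∞ᵃ |v + w| and u ⊥∞ᵃ |v − w|. Then for all u, v, w ∈ V, if |u| ⊥∞ᵃ |v| and |u| ⊥∞ᵃ |w|, then |u| ⊥∞ᵃ |v + w|. -/
/-- `u` is ∞-orthogonal to `v`: `‖u + k • v‖ = max ‖u‖ ‖k • v‖` for all `k ∈ ℝ`. -/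
def InftyOrtho {V : Type*} [Norm V] [Add V] [SMul ℝ V] (u v : V) : Prop :=
  ∀ k : ℝ, ‖u + k • v‖ = max ‖u‖ ‖k • v‖

/-- For positive `a, b`, `a` is absolutely ∞-orthogonal to `b` (written `a ⊥∞ᵃ b`):
`c ⊥∞ d` whenever `0 ≤ c ≤ a` and `0 ≤ d ≤ b`. -/
def AbsInftyOrtho {V : Type*} [Norm V] [Add V] [SMul ℝ V] [LE V] [Zero V] (a b : V) : Prop :=
  ∀ c d : V, 0 ≤ c → c ≤ a → 0 ≤ d → d ≤ b → InftyOrtho c d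

/-- **Orthogonality of absolute values is additive (key step of Theorem 7).**
Let `(V, e)` be an order unit space (an Archimedean ordered real vector space with order
unit `e`, normed by `‖v‖ = inf {k > 0 : 0 ≤ k•e + v and 0 ≤ k•e - v}`) satisfying:
(1a) each `u ∈ V` has a unique decomposition `u = u⁺ - u⁻` with `u⁺, u⁻ ≥ 0` and
`u⁺ ⊥∞ᵃ u⁻` (here the functions `pos, neg` give this decomposition, and
`|u| := pos u + neg u`); and
(1b) for positive `u, v, w`, if `u ⊥∞ᵃ v` and `u ⊥∞ᵃ w` then `u ⊥∞ᵃ |v + w|` and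
`u ⊥∞ᵃ |v - w|`.
Then for all `u, v, w ∈ V`, if `|u| ⊥∞ᵃ |v|` and `|u| ⊥∞ᵃ |w|`, then `|u| ⊥∞ᵃ |v + w|`. -/
theorem absInftyOrtho_abs_add
    {V : Type*} [NormedAddCommGroup V] [NormedSpace ℝ V] [PartialOrder V]
    [CovariantClass V V (· + ·) (· ≤ ·)]
    (hsmul : ∀ (r : ℝ) (v : V), 0 ≤ r → 0 ≤ v → 0 ≤ r • v)
    (e : V) (he : 0 ≤ e)
    (horderunit : ∀ v : V, ∃ k : ℝ, 0 < k ∧ 0 ≤ k • e + v ∧ 0 ≤ k • e - v)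
    (harch : ∀ v : V, (∀ k : ℝ, 0 < k → 0 ≤ k • e + v) → 0 ≤ v)
    (hnorm : ∀ v : V, ‖v‖ = sInf {k : ℝ | 0 < k ∧ 0 ≤ k • e + v ∧ 0 ≤ k • e - v})
    (pos neg : V → V)
    (hdecomp : ∀ u : V, 0 ≤ pos u ∧ 0 ≤ neg u ∧ AbsInftyOrtho (pos u) (neg u) ∧
      u = pos u - neg u)
    (huniq : ∀ u p n : V, 0 ≤ p → 0 ≤ n → AbsInftyOrtho p n → u = p - n →
      p = pos u ∧ n = neg u)
    (h1b : ∀ u v w : V, 0 ≤ u → 0 ≤ v → 0 ≤ w → AbsInftyOrtho u v → AbsInftyOrtho u w →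
      AbsInftyOrtho u (pos (v + w) + neg (v + w)) ∧
      AbsInftyOrtho u (pos (v - w) + neg (v - w))) :
    ∀ u v w : V,
      AbsInftyOrtho (pos u + neg u) (pos v + neg v) →
      AbsInftyOrtho (pos u + neg u) (pos w + neg w) →
      AbsInftyOrtho (pos u + neg u) (pos (v + w) + neg (v + w)) := by

  intro u v w huv huw
  -- |u| ≥ 0
  obtain ⟨hpu, hnu, -, -⟩ := hdecomp u
  obtain ⟨hpv, hnv, -, hv⟩ := hdecomp v
  obtain ⟨hpw, hnw, -, hw⟩ := hdecomp w
  have habs : (0:V) ≤ pos u + neg u := le_trans hpu (by simpa using add_le_add_left hnu (pos u))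
  -- pos and neg of a nonnegative element
  have hfix : ∀ x : V, 0 ≤ x → pos x = x ∧ neg x = 0 := by
    intro x hx
    have horth : AbsInftyOrtho x (0:V) := by
      intro c d _ _ hd0 hd0'
      have : d = 0 := le_antisymm hd0' hd0
      subst this
      intro k
      simp
    have := huniq x x 0 hx le_rfl horth (by simp)
    exact ⟨this.1.symm, this.2.symm⟩
  -- monotone in second argument
  have hmono : ∀ a b b' : V, AbsInftyOrtho a b → b' ≤ b → AbsInftyOrtho a b' := by
    intro a b b' h hb c d hc hca hd hdb
    exact h c d hc hca hd (le_trans hdb hb)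
  have hpv_le : pos v ≤ pos v + neg v := by simpa using add_le_add_left hnv (pos v)
  have hnv_le : neg v ≤ pos v + neg v := by simpa using add_le_add_right hpv (neg v)
  have hpw_le : pos w ≤ pos w + neg w := by simpa using add_le_add_left hnw (pos w)
  have hnw_le : neg w ≤ pos w + neg w := by simpa using add_le_add_right hpw (neg w)
  -- |u| ⊥ pos v + pos w
  have h1 := (h1b (pos u + neg u) (pos v) (pos w) habs hpv hpw
    (hmono _ _ _ huv hpv_le) (hmono _ _ _ huw hpw_le)).1
  have h2 := (h1b (pos u + neg u) (neg v) (neg w) habs hnv hnw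
    (hmono _ _ _ huv hnv_le) (hmono _ _ _ huw hnw_le)).1
  have hP : (0:V) ≤ pos v + pos w := le_trans hpv (by simpa using add_le_add_left hpw (pos v))
  have hN : (0:V) ≤ neg v + neg w := le_trans hnv (by simpa using add_le_add_left hnw (neg v))
  obtain ⟨hP1, hP2⟩ := hfix _ hP
  obtain ⟨hN1, hN2⟩ := hfix _ hN
  rw [hP1, hP2, add_zero] at h1
  rw [hN1, hN2, add_zero] at h2
  have hkey := (h1b (pos u + neg u) (pos v + pos w) (neg v + neg w) habs hP hN h1 h2).2
  have heq : (pos v + pos w) - (neg v + neg w) = v + w := by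
    rw [show pos v + pos w - (neg v + neg w) = (pos v - neg v) + (pos w - neg w) by abel, ← hv, ← hw]
  rwa [heq] at hkey
end

section
/- Let (V, e) be an order unit space. The following are equivalent. Set (1): (a) for each u ∈ V there exists a unique pair (u⁺, u⁻) of positive elements with u⁺ ⊥∞ᵃ u⁻ and u = u⁺ − u⁻ (set |u| := u⁺ + u⁻), and (b) for all positive u, v, w ∈ V, if u ⊥∞ᵃ v and u ⊥∞ᵃ w then u ⊥∞ᵃ |v + w| and u ⊥∞ᵃ |v − w|. Condition (2): condition (1a) holds, and the binary relation ⊥ on V defined by u ⊥ v iff |u| ⊥∞ᵃ |v| satisfies: (i) u ⊥ 0 for all u; (ii) u ⊥ v implies v ⊥ u; (iii) u ⊥ v and u ⊥ w imply u ⊥ (k•v + w) for all k ∈ ℝ; (iv) each u ∈ V has a unique decomposition u = p − n with p, n positive and p ⊥ n; (v) if u ⊥ v and |w| ≤ |v| then u ⊥ w; and moreover for positive a, b one has a ⊥ b if and only if a ⊥∞ᵃ b. -/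
/-- Given decomposition functions `pos, neg` as in condition (1a), set
`|u| := pos u + neg u` and define `u ⊥ v` iff `|u| ⊥∞ᵃ |v|`. -/
def PerpOf {V : Type*} [Norm V] [Add V] [SMul ℝ V] [LE V] [Zero V]
    (pos neg : V → V) (u v : V) : Prop :=
  AbsInftyOrtho (pos u + neg u) (pos v + neg v)

/-- **Theorem 7.** Let `(V, e)` be an order unit space (an Archimedean ordered real
vector space with order unit `e`, normed by
`‖v‖ = inf {k > 0 : 0 ≤ k•e + v and 0 ≤ k•e - v}`) satisfying condition (1a): each
`u ∈ V` has a unique decomposition `u = u⁺ - u⁻` with `u⁺, u⁻ ≥ 0` and `u⁺ ⊥∞ᵃ u⁻`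
(the functions `pos, neg` give this decomposition; set `|u| := pos u + neg u`).
Then the following are equivalent:
(1b) for positive `u, v, w`, if `u ⊥∞ᵃ v` and `u ⊥∞ᵃ w` then `u ⊥∞ᵃ |v + w|` and
`u ⊥∞ᵃ |v - w|`;
(2) the relation `u ⊥ v :↔ |u| ⊥∞ᵃ |v|` makes `V` an absolutely ordered vector space in
which `⊥ = ⊥∞ᵃ` on `V⁺`, i.e.: (i) `u ⊥ 0`; (ii) `u ⊥ v → v ⊥ u`; (iii) `u ⊥ v` and
`u ⊥ w` imply `u ⊥ (k•v + w)` for all `k ∈ ℝ`; (iv) each `u` has a unique decomposition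
`u = p - n` with `p, n ≥ 0` and `p ⊥ n`; (v) `u ⊥ v` and `|w| ≤ |v|` imply `u ⊥ w`;
and for positive `a, b`, `a ⊥ b ↔ a ⊥∞ᵃ b`. -/
theorem absolutely_ordered_iff
    {V : Type*} [NormedAddCommGroup V] [NormedSpace ℝ V] [PartialOrder V]
    [CovariantClass V V (· + ·) (· ≤ ·)]
    (hsmul : ∀ (r : ℝ) (v : V), 0 ≤ r → 0 ≤ v → 0 ≤ r • v)
    (e : V) (he : 0 ≤ e)
    (horderunit : ∀ v : V, ∃ k : ℝ, 0 < k ∧ 0 ≤ k • e + v ∧ 0 ≤ k • e - v)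
    (harch : ∀ v : V, (∀ k : ℝ, 0 < k → 0 ≤ k • e + v) → 0 ≤ v)
    (hnorm : ∀ v : V, ‖v‖ = sInf {k : ℝ | 0 < k ∧ 0 ≤ k • e + v ∧ 0 ≤ k • e - v})
    (pos neg : V → V)
    (hdecomp : ∀ u : V, 0 ≤ pos u ∧ 0 ≤ neg u ∧ AbsInftyOrtho (pos u) (neg u) ∧
      u = pos u - neg u)
    (huniq : ∀ u p n : V, 0 ≤ p → 0 ≤ n → AbsInftyOrtho p n → u = p - n →
      p = pos u ∧ n = neg u) :
    (∀ u v w : V, 0 ≤ u → 0 ≤ v → 0 ≤ w → AbsInftyOrtho u v → AbsInftyOrtho u w →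
        AbsInftyOrtho u (pos (v + w) + neg (v + w)) ∧
        AbsInftyOrtho u (pos (v - w) + neg (v - w)))
    ↔
    ((∀ u : V, PerpOf pos neg u 0) ∧
     (∀ u v : V, PerpOf pos neg u v → PerpOf pos neg v u) ∧
     (∀ u v w : V, PerpOf pos neg u v → PerpOf pos neg u w →
        ∀ k : ℝ, PerpOf pos neg u (k • v + w)) ∧
     (∀ u : V, ∃! pn : V × V, 0 ≤ pn.1 ∧ 0 ≤ pn.2 ∧ PerpOf pos neg pn.1 pn.2 ∧
        u = pn.1 - pn.2) ∧
     (∀ u v w : V, PerpOf pos neg u v → pos w + neg w ≤ pos v + neg v →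
        PerpOf pos neg u w) ∧
     (∀ a b : V, 0 ≤ a → 0 ≤ b → (PerpOf pos neg a b ↔ AbsInftyOrtho a b))) := by
  classical
  -- basic lemmas
  have ortho_zero : ∀ c : V, InftyOrtho c (0 : V) := by
    intro c k
    simp [InftyOrtho, smul_zero]
  have infty_symm : ∀ u v : V, InftyOrtho u v → InftyOrtho v u := by
    intro u v h k
    rcases eq_or_ne k 0 with rfl | hk
    · simp
    · have h1 := h k⁻¹
      have hrw : v + k • u = k • (u + k⁻¹ • v) := by
        rw [smul_add, smul_smul, mul_inv_cancel₀ hk, one_smul, add_comm]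
      rw [hrw, norm_smul, h1, norm_smul, norm_smul,
        mul_max_of_nonneg _ _ (norm_nonneg k), ← mul_assoc, ← norm_mul,
        mul_inv_cancel₀ hk, norm_one, one_mul, max_comm]
  have absO_zero : ∀ a : V, AbsInftyOrtho a (0 : V) := by
    intro a c d hc hca hd hd0
    have : d = 0 := le_antisymm hd0 hd
    subst this
    exact ortho_zero c
  have absO_mono : ∀ a b b' : V, AbsInftyOrtho a b → b' ≤ b → AbsInftyOrtho a b' :=
    fun a b b' h hb' c d hc hca hd hdb => h c d hc hca hd (hdb.trans hb')
  have absO_symm : ∀ a b : V, AbsInftyOrtho a b → AbsInftyOrtho b a :=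
    fun a b h c d hc hcb hd hda => infty_symm _ _ (h d c hd hda hc hcb)
  have absO_smul : ∀ (r : ℝ) (a b : V), 0 ≤ r → AbsInftyOrtho a b →
      AbsInftyOrtho a (r • b) := by
    intro r a b hr h c d hc hca hd hdrb
    rcases hr.eq_or_lt with rfl | hr'
    · rw [zero_smul] at hdrb
      have : d = 0 := le_antisymm hdrb hd
      subst this
      exact ortho_zero c
    · have hd' : 0 ≤ r⁻¹ • d := hsmul _ _ (inv_nonneg.mpr hr'.le) hd
      have hdb : r⁻¹ • d ≤ b := by
        have h0 := hsmul r⁻¹ (r • b - d) (inv_nonneg.mpr hr'.le) (sub_nonneg.mpr hdrb)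
        rw [smul_sub, smul_smul, inv_mul_cancel₀ hr'.ne', one_smul] at h0
        exact sub_nonneg.mp h0
      have h2 := h c (r⁻¹ • d) hc hca hd' hdb
      intro k
      have h3 := h2 (k * r)
      rwa [smul_smul, mul_assoc, mul_inv_cancel₀ hr'.ne', mul_one] at h3
  have pos_eq : ∀ a : V, 0 ≤ a → pos a = a ∧ neg a = 0 := by
    intro a ha
    obtain ⟨h1, h2⟩ := huniq a a 0 ha le_rfl (absO_zero a) (by rw [sub_zero])
    exact ⟨h1.symm, h2.symm⟩
  have habs_nonneg : ∀ x : V, 0 ≤ pos x + neg x :=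
    fun x => add_nonneg (hdecomp x).1 (hdecomp x).2.1
  have smul_decomp : ∀ (k : ℝ) (v : V), 0 ≤ k →
      pos (k • v) = k • pos v ∧ neg (k • v) = k • neg v := by
    intro k v hk
    obtain ⟨hp, hn, ho, heq⟩ := hdecomp v
    have hortho : AbsInftyOrtho (k • pos v) (k • neg v) :=
      absO_symm _ _ (absO_smul k _ _ hk (absO_symm _ _ (absO_smul k _ _ hk ho)))
    have heq' : k • v = k • pos v - k • neg v := by
      rw [← smul_sub, ← heq]
    obtain ⟨h1, h2⟩ := huniq (k • v) (k • pos v) (k • neg v)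
      (hsmul _ _ hk hp) (hsmul _ _ hk hn) hortho heq'
    exact ⟨h1.symm, h2.symm⟩
  have smul_decomp_neg : ∀ (k : ℝ) (v : V), k < 0 →
      pos (k • v) = (-k) • neg v ∧ neg (k • v) = (-k) • pos v := by
    intro k v hk
    obtain ⟨hp, hn, ho, heq⟩ := hdecomp v
    have hk' : (0:ℝ) ≤ -k := by linarith
    have hortho : AbsInftyOrtho ((-k) • neg v) ((-k) • pos v) :=
      absO_symm _ _ (absO_smul (-k) _ _ hk' (absO_symm _ _
        (absO_smul (-k) _ _ hk' (absO_symm _ _ ho))))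
    have heq' : k • v = (-k) • neg v - (-k) • pos v := by
      have : k • v = k • (pos v - neg v) := by rw [← heq]
      rw [this, smul_sub, neg_smul, neg_smul]
      abel
    obtain ⟨h1, h2⟩ := huniq (k • v) ((-k) • neg v) ((-k) • pos v)
      (hsmul _ _ hk' hn) (hsmul _ _ hk' hp) hortho heq'
    exact ⟨h1.symm, h2.symm⟩
  constructor
  · -- forward direction: (1b) → (2)
    intro h1b
    refine ⟨?_, ?_, ?_, ?_, ?_, ?_⟩
    · -- (i)
      intro u
      show AbsInftyOrtho (pos u + neg u) (pos 0 + neg 0)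
      rw [(pos_eq 0 le_rfl).1, (pos_eq 0 le_rfl).2, add_zero]
      exact absO_zero _
    · -- (ii)
      intro u v h
      exact absO_symm _ _ h
    · -- (iii)
      intro u v w huv huw k
      have hApv : AbsInftyOrtho (pos u + neg u) (pos v) :=
        absO_mono _ _ _ huv (le_add_of_nonneg_right (hdecomp v).2.1)
      have hAnv : AbsInftyOrtho (pos u + neg u) (neg v) :=
        absO_mono _ _ _ huv (le_add_of_nonneg_left (hdecomp v).1)
      have hApw : AbsInftyOrtho (pos u + neg u) (pos w) :=
        absO_mono _ _ _ huw (le_add_of_nonneg_right (hdecomp w).2.1)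
      have hAnw : AbsInftyOrtho (pos u + neg u) (neg w) :=
        absO_mono _ _ _ huw (le_add_of_nonneg_left (hdecomp w).1)
      have hkv : AbsInftyOrtho (pos u + neg u) (pos (k • v)) ∧
          AbsInftyOrtho (pos u + neg u) (neg (k • v)) := by
        rcases le_or_gt 0 k with hk | hk
        · rw [(smul_decomp k v hk).1, (smul_decomp k v hk).2]
          exact ⟨absO_smul _ _ _ hk hApv, absO_smul _ _ _ hk hAnv⟩
        · rw [(smul_decomp_neg k v hk).1, (smul_decomp_neg k v hk).2]
          have hk' : (0:ℝ) ≤ -k := by linarith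
          exact ⟨absO_smul _ _ _ hk' hAnv, absO_smul _ _ _ hk' hApv⟩
      have add_ortho : ∀ a b : V, 0 ≤ a → 0 ≤ b →
          AbsInftyOrtho (pos u + neg u) a → AbsInftyOrtho (pos u + neg u) b →
          AbsInftyOrtho (pos u + neg u) (a + b) := by
        intro a b ha hb hA hB
        have h0 := (h1b (pos u + neg u) a b (habs_nonneg u) ha hb hA hB).1
        rwa [(pos_eq (a + b) (add_nonneg ha hb)).1,
          (pos_eq (a + b) (add_nonneg ha hb)).2, add_zero] at h0
      have hv1 : AbsInftyOrtho (pos u + neg u) (pos (k • v) + pos w) :=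
        add_ortho _ _ (hdecomp (k • v)).1 (hdecomp w).1 hkv.1 hApw
      have hw1 : AbsInftyOrtho (pos u + neg u) (neg (k • v) + neg w) :=
        add_ortho _ _ (hdecomp (k • v)).2.1 (hdecomp w).2.1 hkv.2 hAnw
      have hmain := (h1b (pos u + neg u) (pos (k • v) + pos w) (neg (k • v) + neg w)
        (habs_nonneg u)
        (add_nonneg (hdecomp (k • v)).1 (hdecomp w).1)
        (add_nonneg (hdecomp (k • v)).2.1 (hdecomp w).2.1) hv1 hw1).2
      have heq : (pos (k • v) + pos w) - (neg (k • v) + neg w) = k • v + w := by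
        have h1 := (hdecomp (k • v)).2.2.2
        have h2 := (hdecomp w).2.2.2
        have h3 : (pos (k • v) + pos w) - (neg (k • v) + neg w)
            = (pos (k • v) - neg (k • v)) + (pos w - neg w) := by abel
        rw [h3, ← h1, ← h2]
      rw [heq] at hmain
      exact hmain
    · -- (iv)
      intro u
      obtain ⟨hp, hn, ho, heq⟩ := hdecomp u
      refine ⟨(pos u, neg u), ⟨hp, hn, ?_, heq⟩, ?_⟩
      · show AbsInftyOrtho (pos (pos u) + neg (pos u)) (pos (neg u) + neg (neg u))
        rw [(pos_eq (pos u) hp).1, (pos_eq (pos u) hp).2, add_zero,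
          (pos_eq (neg u) hn).1, (pos_eq (neg u) hn).2, add_zero]
        exact ho
      · rintro ⟨p, n⟩ ⟨hp', hn', hpn, heq'⟩
        have hpn' : AbsInftyOrtho p n := by
          have h0 : AbsInftyOrtho (pos p + neg p) (pos n + neg n) := hpn
          rwa [(pos_eq p hp').1, (pos_eq p hp').2, add_zero,
            (pos_eq n hn').1, (pos_eq n hn').2, add_zero] at h0
        obtain ⟨h1, h2⟩ := huniq u p n hp' hn' hpn' heq'
        exact Prod.ext h1 h2
    · -- (v)
      intro u v w huv hle
      exact absO_mono _ _ _ huv hle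
    · -- (vi)
      intro a b ha hb
      show AbsInftyOrtho (pos a + neg a) (pos b + neg b) ↔ AbsInftyOrtho a b
      rw [(pos_eq a ha).1, (pos_eq a ha).2, add_zero,
        (pos_eq b hb).1, (pos_eq b hb).2, add_zero]
  · -- reverse direction: (2) → (1b)
    rintro ⟨-, -, h3, -, -, h6⟩
    intro u v w hu hv hw huv huw
    have Puv : PerpOf pos neg u v := (h6 u v hu hv).mpr huv
    have Puw : PerpOf pos neg u w := (h6 u w hu hw).mpr huw
    constructor
    · have h0 := h3 u v w Puv Puw 1
      rw [one_smul] at h0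
      have h0' : AbsInftyOrtho (pos u + neg u) (pos (v + w) + neg (v + w)) := h0
      rwa [(pos_eq u hu).1, (pos_eq u hu).2, add_zero] at h0'
    · have h0 := h3 u w v Puw Puv (-1)
      rw [show (-1 : ℝ) • w + v = v - w by rw [neg_one_smul, neg_add_eq_sub]] at h0
      have h0' : AbsInftyOrtho (pos u + neg u) (pos (v - w) + neg (v - w)) := h0
      rwa [(pos_eq u hu).1, (pos_eq u hu).2, add_zero] at h0'
end
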